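/- arXiv:0905.4063 — 4 statements merged into one kernel-verified Lean document; each statement's English description precedes it below -/
import Mathlib

section
/- For interaction structures w₁ from S₁ to S₂ and w₂ from S₂ to S₃, the angelic transformer of the sequential composition equals the composition of the angelic transformers: (w₁ ; w₂)° = w₁° ∘ w₂°. -/
structure IS (S S' : Type*) where
  A : S → Type*
  D : ∀ s, A s → Type*
  n : ∀ s (a : A s), D s a → S'

def IS.ang {S S' : Type*} (w : IS S S') (U : Set S') : Set S :=
  {s | ∃ a : w.A s, ∀ d : w.D s a, w.n s a d ∈ U}

/-- Sequential composition of interaction structures. -/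
def IS.seq {S₁ S₂ S₃ : Type*} (w₁ : IS S₁ S₂) (w₂ : IS S₂ S₃) : IS S₁ S₃ where
  A s := (a₁ : w₁.A s) × (∀ d₁ : w₁.D s a₁, w₂.A (w₁.n s a₁ d₁))
  D s p := (d₁ : w₁.D s p.1) × w₂.D (w₁.n s p.1 d₁) (p.2 d₁)
  n s p d := w₂.n (w₁.n s p.1 d.1) (p.2 d.1) d.2

theorem IS.mem_ang {S S' : Type*} (w : IS S S') (U : Set S') (s : S) :
    s ∈ w.ang U ↔ ∃ a : w.A s, ∀ d : w.D s a, w.n s a d ∈ U :=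
  Iff.rfl

-- A composite command is a first command together with a choice function for the second one,
-- so `Classical.skolem` matches the two sides.
theorem seq_ang {S₁ S₂ S₃ : Type*} (w₁ : IS S₁ S₂) (w₂ : IS S₂ S₃) (U : Set S₃) :
    (w₁.seq w₂).ang U = w₁.ang (w₂.ang U) := by
  ext s
  simp only [IS.mem_ang, IS.seq, Sigma.exists, Sigma.forall, Classical.skolem]
end

section
/- If R is a linear simulation from wₕ to wₗ, then the direct image under R of any wₕ-invariant is a wₗ-invariant: if U ⊆ wₕ°(U) then ⟨R⁻¹⟩(U) ⊆ wₗ°(⟨R⁻¹⟩(U)), where ⟨R⁻¹⟩(U) = {sₗ | ∃ sₕ ∈ U, (sₕ,sₗ) ∈ R}. -/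
def LinSim {Sh Sl : Type*} (wh : IS Sh Sh) (wl : IS Sl Sl) (R : Set (Sh × Sl)) : Prop :=
  ∀ sh sl, (sh, sl) ∈ R → ∀ ah : wh.A sh, ∃ al : wl.A sl,
    ∀ dl : wl.D sl al, ∃ dh : wh.D sh ah,
      (wh.n sh ah dh, wl.n sl al dl) ∈ R

/-- Direct image along `R`. -/
def img {Sh Sl : Type*} (R : Set (Sh × Sl)) (U : Set Sh) : Set Sl :=
  {sl | ∃ sh ∈ U, (sh, sl) ∈ R}

theorem img_mono {Sh Sl : Type*} (R : Set (Sh × Sl)) {U V : Set Sh} (hUV : U ⊆ V) :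
    img R U ⊆ img R V :=
  fun _ ⟨sh, hsh, hR⟩ => ⟨sh, hUV hsh, hR⟩

theorem LinSim.img_ang_subset {Sh Sl : Type*} {wh : IS Sh Sh} {wl : IS Sl Sl}
    {R : Set (Sh × Sl)} (hR : LinSim wh wl R) (U : Set Sh) :
    img R (wh.ang U) ⊆ wl.ang (img R U) := by
  rintro sl ⟨sh, ⟨ah, hah⟩, hshl⟩
  obtain ⟨al, hal⟩ := hR sh sl hshl ah
  refine ⟨al, fun dl => ?_⟩
  obtain ⟨dh, hdh⟩ := hal dl
  exact ⟨wh.n sh ah dh, hah dh, hdh⟩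

theorem linSim_image_invariant {Sh Sl : Type*} (wh : IS Sh Sh) (wl : IS Sl Sl)
    (R : Set (Sh × Sl)) (hR : LinSim wh wl R) (U : Set Sh) (hU : U ⊆ wh.ang U) :
    img R U ⊆ wl.ang (img R U) :=
  (img_mono R hU).trans (hR.img_ang_subset U)
end

section
/- Let F be a monotone predicate transformer on P(S) with angelic iteration F*(U) = μX.(U ∪ F(X)). For monotone predicate transformers Fₕ on P(Sₕ) and Fₗ on P(Sₗ), say a relation R ⊆ Sₕ × Sₗ is a simulation of Fₕ by Fₗ if ⟨R⁻¹⟩ ∘ Fₕ ⊆ Fₗ ∘ ⟨R⁻¹⟩ pointwise. Then R is a simulation of Fₕ by (Fₗ)* if and only if R is a simulation of (Fₕ)* by (Fₗ)*. -/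
/-!
The backward direction holds because `Fₕ U ⊆ Fₕ* U`. For the forward one, `⟨R⁻¹⟩` is left
adjoint to the core `[R] W = {sₕ | ∀ sₗ, (sₕ, sₗ) ∈ R → sₗ ∈ W}`, so it suffices that
`Fₕ* U ⊆ [R] (Fₗ* ⟨R⁻¹⟩ U)`. By least-fixed-point induction this follows once the right-hand
side contains `U` and is closed under `Fₕ`; both reduce, through the adjunction, to `Fₗ*` being
a closure operator.
-/

def star {S : Type*} (F : Set S → Set S) (U : Set S) : Set S :=
  sInf {X | U ∪ F X ⊆ X}

/-- `R` is a simulation of `Fh` by `Fl`: `⟨R⁻¹⟩ ∘ Fh ⊆ Fl ∘ ⟨R⁻¹⟩` pointwise. -/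
def PTSim {Sh Sl : Type*} (Fh : Set Sh → Set Sh) (Fl : Set Sl → Set Sl)
    (R : Set (Sh × Sl)) : Prop :=
  ∀ U : Set Sh, img R (Fh U) ⊆ Fl (img R U)

section star

variable {S : Type*} {F : Set S → Set S}

lemma star_le {U X : Set S} (h : U ∪ F X ⊆ X) : star F U ⊆ X :=
  sInf_le h

lemma subset_star (F : Set S → Set S) (U : Set S) : U ⊆ star F U :=
  le_sInf fun _ hX => (Set.union_subset_iff.1 hX).1

lemma map_star_subset (hF : Monotone F) (U : Set S) : F (star F U) ⊆ star F U :=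
  le_sInf fun _ hX => (hF (sInf_le hX)).trans (Set.union_subset_iff.1 hX).2

lemma map_subset_star (hF : Monotone F) (U : Set S) : F U ⊆ star F U :=
  (hF (subset_star F U)).trans (map_star_subset hF U)

def starClosure (hF : Monotone F) : ClosureOperator (Set S) :=
  .mk₂ (star F) (subset_star F) fun _ _ h => star_le (Set.union_subset h (map_star_subset hF _))

end star

lemma img_eq_image {Sh Sl : Type*} (R : Set (Sh × Sl)) (U : Set Sh) :
    img R U = SetRel.image R U :=
  rfl

namespace PTSim

variable {Sh Sl : Type*} {Fh Fh' : Set Sh → Set Sh} {Fl : Set Sl → Set Sl} {R : Set (Sh × Sl)}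

lemma mono_left (h : PTSim Fh Fl R) (hF : ∀ U, Fh' U ⊆ Fh U) : PTSim Fh' Fl R :=
  fun U => (SetRel.image_subset_image (hF U)).trans (h U)

lemma star_left (c : ClosureOperator (Set Sl)) (h : PTSim Fh c R) : PTSim (star Fh) c R := by
  intro U
  rw [img_eq_image, SetRel.image_subset_iff]
  apply star_le
  refine Set.union_subset (SetRel.image_subset_iff.1 (c.le_closure _)) ?_
  rw [← SetRel.image_subset_iff]
  exact (h _).trans (c.closure_min (SetRel.image_core_gc.l_u_le _) (c.isClosed_closure _))

end PTSim

theorem genSim_iff_star_sim {Sh Sl : Type*}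
    (Fh : Set Sh → Set Sh) (Fl : Set Sl → Set Sl)
    (hFh : Monotone Fh) (hFl : Monotone Fl) (R : Set (Sh × Sl)) :
    PTSim Fh (star Fl) R ↔ PTSim (star Fh) (star Fl) R :=
  ⟨fun h => h.star_left (starClosure hFl), fun h => h.mono_left (map_subset_star hFh)⟩
end

section
/- Let (S, A, J) be a basic topology with convergence: A is a closure operator, J an interior operator on P(S), A and J are compatible (A(U) ∩ J(V) nonempty implies U ∩ J(V) nonempty), and A satisfies the convergence rule: s ∈ A(U) and s ∈ A(V) imply s ∈ A(U ↓ V), where U ↓ V = ↓U ∩ ↓V and ↓U = {s | ∃ s' ∈ U, s ∈ A({s'})}. Then the lattice of open sets (subsets U with U = A(U)), with meet U ∩ V and join ⋁ᵢ Uᵢ = A(⋃ᵢ Uᵢ), is distributive: for open U and a family of open sets (Vᵢ), U ∩ ⋁ᵢ Vᵢ = ⋁ᵢ (U ∩ Vᵢ). -/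
/-!
Convergence puts every point of `U ∩ A (⋃ i, V i)` into `A (dc A U ∩ dc A (⋃ i, V i))`, and
fixed points of `A` are down-closed, so `dc A U ∩ dc A (⋃ i, V i) ⊆ ⋃ i, U ∩ V i`. The reverse
inclusion is monotonicity of `A`.
-/

/-- Down-closure with respect to a closure operator `A`. -/
def dc {S : Type*} (A : Set S → Set S) (U : Set S) : Set S :=
  {s | ∃ s' ∈ U, s ∈ A {s'}}

open Set

section ClosureOperator

variable {S : Type*} {A : Set S → Set S}

theorem closureOp_mono (hA1 : ∀ U : Set S, U ⊆ A U)
    (hA2 : ∀ U V : Set S, U ⊆ A V → A U ⊆ A V) {U V : Set S} (h : U ⊆ V) : A U ⊆ A V :=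
  hA2 U V (h.trans (hA1 V))

theorem dc_subset_of_eq_closure (hA1 : ∀ U : Set S, U ⊆ A U)
    (hA2 : ∀ U V : Set S, U ⊆ A V → A U ⊆ A V) {U : Set S} (hU : U = A U) : dc A U ⊆ U := by
  rintro t ⟨u, hu, htu⟩
  rw [hU]
  exact hA2 {u} U (singleton_subset_iff.2 (hA1 U hu)) htu

theorem dc_iUnion {ι : Type*} (V : ι → Set S) : dc A (⋃ i, V i) = ⋃ i, dc A (V i) := by
  ext t
  simp only [dc, mem_iUnion, mem_ofPred_eq]
  constructor
  · rintro ⟨v, ⟨i, hv⟩, htv⟩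
    exact ⟨i, v, hv, htv⟩
  · rintro ⟨i, v, hv, htv⟩
    exact ⟨v, ⟨i, hv⟩, htv⟩

end ClosureOperator

theorem convergent_basic_topology_distributive_general {S : Type*}
    (A : Set S → Set S)
    (hA1 : ∀ U : Set S, U ⊆ A U)
    (hA2 : ∀ U V : Set S, U ⊆ A V → A U ⊆ A V)
    (hconv : ∀ (s : S) (U V : Set S), s ∈ A U → s ∈ A V → s ∈ A (dc A U ∩ dc A V))
    {ι : Type*} (U : Set S) (V : ι → Set S)
    (hU : U = A U) (hV : ∀ i, V i = A (V i)) :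
    U ∩ A (⋃ i, V i) = A (⋃ i, U ∩ V i) := by
  have hdcU : dc A U ⊆ U := dc_subset_of_eq_closure hA1 hA2 hU
  have hdcV : dc A (⋃ i, V i) ⊆ ⋃ i, V i := by
    rw [dc_iUnion]
    exact iUnion_mono fun i => dc_subset_of_eq_closure hA1 hA2 (hV i)
  apply Subset.antisymm
  · rintro s ⟨hsU, hsV⟩
    refine hA2 _ _ ?_ (hconv s U _ (hA1 U hsU) hsV)
    calc dc A U ∩ dc A (⋃ i, V i) ⊆ U ∩ ⋃ i, V i := inter_subset_inter hdcU hdcV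
      _ = ⋃ i, U ∩ V i := inter_iUnion U V
      _ ⊆ A (⋃ i, U ∩ V i) := hA1 _
  · refine subset_inter ?_ ?_
    · exact (closureOp_mono hA1 hA2 (iUnion_subset fun i => inter_subset_left)).trans
        hU.symm.subset
    · exact closureOp_mono hA1 hA2 (iUnion_mono fun i => inter_subset_right)

theorem convergent_basic_topology_distributive {S : Type*}
    (A J : Set S → Set S)
    (hA1 : ∀ U : Set S, U ⊆ A U)
    (hA2 : ∀ U V : Set S, U ⊆ A V → A U ⊆ A V)
    (hJ1 : ∀ U : Set S, J U ⊆ U)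
    (hJ2 : ∀ U V : Set S, J U ⊆ V → J U ⊆ J V)
    (hcompat : ∀ U V : Set S, (A U ∩ J V).Nonempty → (U ∩ J V).Nonempty)
    (hconv : ∀ (s : S) (U V : Set S), s ∈ A U → s ∈ A V → s ∈ A (dc A U ∩ dc A V))
    {ι : Type*} (U : Set S) (V : ι → Set S)
    (hU : U = A U) (hV : ∀ i, V i = A (V i)) :
    U ∩ A (⋃ i, V i) = A (⋃ i, U ∩ V i) :=
  convergent_basic_topology_distributive_general A hA1 hA2 hconv U V hU hV
end
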